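/- arXiv:2307.09487 — 3 statements merged into one kernel-verified Lean document; each statement's English description precedes it below -/
import Mathlib

section
/- Let z be a submodular function with z(∅) = 0 on a finite ground set, let c_1,...,c_m be modular (additive) nonnegative cost functions, and let ρ > 0. Suppose A = {a_1,...,a_t} is a set of elements ordered so that each a_i satisfies z(a_i | A_{i-1}) ≥ ρ · Σ_{j=1}^m c_j(a_i), where A_{i-1} = {a_1,...,a_{i-1}}. If A violates some knapsack constraint, i.e., c_j(A) > 1 for some j ∈ [m], then z(A) > ρ. -/
def Submodular {α : Type*} [DecidableEq α] [Fintype α] (f : Finset α → ℝ) : Prop :=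
  ∀ A B : Finset α, A ⊆ B → ∀ e ∉ B,
    f (insert e A) - f A ≥ f (insert e B) - f B

/-- If every element of `A = {a_1, ..., a_t}` was added with density at least `ρ`
(with respect to the prefix of previously added elements), and `A` violates some
knapsack constraint, then `z(A) > ρ`. -/
theorem density_violating_set {α : Type*} [DecidableEq α] [Fintype α]
    (z : Finset α → ℝ) (hz : Submodular z) (hz0 : z ∅ = 0)
    (m : ℕ) (c : Fin m → α → ℝ) (hc : ∀ j e, 0 ≤ c j e)
    (ρ : ℝ) (hρ : 0 < ρ)
    (t : ℕ) (a : ℕ → α)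
    (hinj : ∀ i < t, ∀ j < t, a i = a j → i = j)
    (hdens : ∀ i < t,
      z (insert (a i) ((Finset.range i).image a)) - z ((Finset.range i).image a)
        ≥ ρ * ∑ j : Fin m, c j (a i))
    (hviol : ∃ j : Fin m, 1 < ∑ e ∈ (Finset.range t).image a, c j e) :
    z ((Finset.range t).image a) > ρ := by
  obtain ⟨j₀, hj₀⟩ := hviol
  -- telescoping
  have htel : z ((Finset.range t).image a) =
      ∑ i ∈ Finset.range t,
        (z ((Finset.range (i+1)).image a) - z ((Finset.range i).image a)) := by
    rw [Finset.sum_range_sub (fun n => z ((Finset.range n).image a))]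
    simp [hz0]
  have hsucc : ∀ i, (Finset.range (i+1)).image a
      = insert (a i) ((Finset.range i).image a) := by
    intro i
    rw [Finset.range_add_one, Finset.image_insert]
  have h1 : z ((Finset.range t).image a)
      ≥ ∑ i ∈ Finset.range t, ρ * ∑ j : Fin m, c j (a i) := by
    rw [htel]
    apply Finset.sum_le_sum
    intro i hi
    rw [hsucc i]
    exact hdens i (Finset.mem_range.mp hi)
  have h2 : ∑ i ∈ Finset.range t, ρ * ∑ j : Fin m, c j (a i)
      = ρ * ∑ j : Fin m, ∑ e ∈ (Finset.range t).image a, c j e := by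
    rw [← Finset.mul_sum, Finset.sum_comm]
    congr 1
    apply Finset.sum_congr rfl
    intro j _
    rw [Finset.sum_image]
    intro x hx y hy hxy
    exact hinj x (Finset.mem_range.mp hx) y (Finset.mem_range.mp hy) hxy
  have h3 : (1:ℝ) < ∑ j : Fin m, ∑ e ∈ (Finset.range t).image a, c j e := by
    calc (1:ℝ) < ∑ e ∈ (Finset.range t).image a, c j₀ e := hj₀
      _ ≤ _ := Finset.single_le_sum
          (f := fun j : Fin m => ∑ e ∈ (Finset.range t).image a, c j e)
          (fun j _ => Finset.sum_nonneg fun e _ => hc j e) (Finset.mem_univ j₀)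
  calc ρ = ρ * 1 := (mul_one ρ).symm
    _ < ρ * ∑ j : Fin m, ∑ e ∈ (Finset.range t).image a, c j e :=
        by exact (mul_lt_mul_iff_right₀ hρ).mpr h3
    _ = ∑ i ∈ Finset.range t, ρ * ∑ j : Fin m, c j (a i) := h2.symm
    _ ≤ z ((Finset.range t).image a) := h1
end

section
/- Let z be a nonnegative submodular function on a finite ground set N' and let O ⊆ N'. Let S_1,...,S_ℓ be pairwise disjoint subsets of N'. Then (1/ℓ) Σ_{i=1}^ℓ z(O ∪ S_i) ≥ (1 - 1/ℓ) · z(O). -/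
lemma submod_marg {α : Type*} [DecidableEq α] [Fintype α] (z : Finset α → ℝ)
    (hz : Submodular z) :
    ∀ C A B : Finset α, A ⊆ B → Disjoint C B →
      z (A ∪ C) - z A ≥ z (B ∪ C) - z B := by
  intro C
  induction C using Finset.induction_on with
  | empty => intro A B hAB _; simp
  | @insert e C' he ih =>
    intro A B hAB hdis
    have heB : e ∉ B := Finset.disjoint_left.mp hdis (Finset.mem_insert_self e C')
    have hdis' : Disjoint C' B :=
      (Finset.disjoint_insert_left.mp hdis).2
    have h1 := ih A B hAB hdis'
    have hsub : A ∪ C' ⊆ B ∪ C' := Finset.union_subset_union_left hAB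
    have heBC : e ∉ B ∪ C' := by simp [heB, he]
    have h2 := hz (A ∪ C') (B ∪ C') hsub e heBC
    have hA : A ∪ insert e C' = insert e (A ∪ C') := by rw [Finset.union_insert]
    have hB : B ∪ insert e C' = insert e (B ∪ C') := by rw [Finset.union_insert]
    rw [hA, hB]
    linarith

/-- For pairwise disjoint sets `S_1, ..., S_ℓ` and nonnegative submodular `z`,
`(1/ℓ) Σ_i z(O ∪ S_i) ≥ (1 - 1/ℓ) z(O)`. -/
theorem avg_union_disjoint {α : Type*} [DecidableEq α] [Fintype α]
    (z : Finset α → ℝ) (hz : Submodular z) (hnonneg : ∀ S, 0 ≤ z S)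
    (O : Finset α) (ℓ : ℕ) (hℓ : 1 ≤ ℓ) (S : Fin ℓ → Finset α)
    (hdisj : ∀ i j, i ≠ j → Disjoint (S i) (S j)) :
    (1 / (ℓ : ℝ)) * ∑ i : Fin ℓ, z (O ∪ S i) ≥ (1 - 1 / (ℓ : ℝ)) * z O := by
  have key : ∀ T : Finset (Fin ℓ),
      ∑ i ∈ T, z (O ∪ S i) + z O ≥ z (O ∪ T.biUnion S) + (T.card : ℝ) * z O := by
    intro T
    induction T using Finset.induction_on with
    | empty => simp
    | @insert j T hj ih =>
      have hSU : Disjoint (S j) (T.biUnion S) := by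
        rw [Finset.disjoint_biUnion_right]
        intro i hi
        exact hdisj j i (fun h => hj (h ▸ hi))
      set U := T.biUnion S with hU
      set C := S j \ (O ∪ U) with hC
      have hdisC : Disjoint C (O ∪ U) := Finset.sdiff_disjoint
      have h1 := submod_marg z hz C O (O ∪ U) Finset.subset_union_left hdisC
      have hOC : O ∪ C = O ∪ S j := by
        ext x
        simp only [hC, Finset.mem_union, Finset.mem_sdiff]
        constructor
        · tauto
        · rintro (h | h)
          · left; exact h
          · by_cases hx : x ∈ O ∪ U
            · rcases Finset.mem_union.mp hx with h' | h'
              · left; exact h'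
              · exact absurd h' (Finset.disjoint_left.mp hSU h)
            · right; exact ⟨h, by simpa using hx⟩
      have hUC : O ∪ U ∪ C = O ∪ (insert j T).biUnion S := by
        rw [hC, Finset.union_sdiff_self_eq_union, Finset.biUnion_insert, ← hU,
          Finset.union_comm (S j) U, ← Finset.union_assoc]
      rw [hOC, hUC] at h1
      rw [Finset.sum_insert hj, Finset.card_insert_of_notMem hj]
      push_cast
      have := hnonneg (O ∪ (insert j T).biUnion S)
      -- h1 : z (O ∪ S j) - z O ≥ z (O ∪ (insert j T).biUnion S) - z (O ∪ U)
      linarith [ih, hnonneg (O ∪ (insert j T).biUnion S)]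
  have hkey := key Finset.univ
  simp only [Finset.card_univ, Fintype.card_fin] at hkey
  have hℓpos : (0 : ℝ) < ℓ := by exact_mod_cast hℓ
  have h0 := hnonneg (O ∪ Finset.univ.biUnion S)
  have hsum : ((ℓ:ℝ) - 1) * z O ≤ ∑ i : Fin ℓ, z (O ∪ S i) := by linarith
  have h2 : (1 - 1/(ℓ:ℝ)) * z O = (((ℓ:ℝ)-1) * z O) / ℓ := by field_simp
  rw [ge_iff_le, h2, one_div, inv_mul_eq_div]
  gcongr
end

section
/- Let f be a nonnegative set function, S_OPT a finite set of size r ≥ 1 with f(S_OPT) = OPT, and suppose f is submodular with f(∅) ≥ 0. Order S_OPT greedily as e_1,...,e_r where e_i maximizes the marginal gain to {e_1,...,e_{i-1}}. Then for every C ≤ r, the set A = {e_1,...,e_C} satisfies f(A) ≥ (C/r) · OPT. -/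
lemma sub_sum_bound {α : Type*} [DecidableEq α] [Fintype α]
    (f : Finset α → ℝ) (hf : Submodular f) (A : Finset α) :
    ∀ T : Finset α, Disjoint A T →
      f (A ∪ T) - f A ≤ ∑ x ∈ T, (f (insert x A) - f A) := by
  intro T
  induction T using Finset.induction_on with
  | empty => simp
  | @insert a s ha ih =>
    intro hd
    have hdA : Disjoint A s := hd.mono_right (Finset.subset_insert a s)
    have haA : a ∉ A := fun h => (Finset.disjoint_left.mp hd h) (Finset.mem_insert_self a s)
    have haAs : a ∉ A ∪ s := by simp [haA, ha]
    have h1 : f (insert a (A ∪ s)) - f (A ∪ s) ≤ f (insert a A) - f A :=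
      hf A (A ∪ s) Finset.subset_union_left a haAs
    have h2 := ih hdA
    have hu : A ∪ insert a s = insert a (A ∪ s) := by rw [Finset.union_insert]
    rw [hu, Finset.sum_insert ha]
    linarith

/-- If `S_OPT = {e_1, ..., e_r}` is ordered greedily with respect to `f`, then for every
`C ≤ r` the prefix `A = {e_1, ..., e_C}` satisfies `f(A) ≥ (C/r) · f(S_OPT)`. -/
theorem greedy_prefix_bound {α : Type*} [DecidableEq α] [Fintype α]
    (f : Finset α → ℝ) (hf : Submodular f) (hnonneg : ∀ S, 0 ≤ f S) (hempty : f ∅ = 0)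
    (r : ℕ) (hr : 1 ≤ r) (e : ℕ → α)
    (hinj : ∀ i < r, ∀ j < r, e i = e j → i = j)
    (hgreedy : ∀ i < r, ∀ x ∈ (Finset.range r).image e \ (Finset.range i).image e,
      f (insert (e i) ((Finset.range i).image e)) - f ((Finset.range i).image e)
        ≥ f (insert x ((Finset.range i).image e)) - f ((Finset.range i).image e)) :
    ∀ C ≤ r, f ((Finset.range C).image e)
      ≥ ((C : ℝ) / r) * f ((Finset.range r).image e) := by
  set S := (Finset.range r).image e with hS
  have hcard : ∀ i ≤ r, ((Finset.range i).image e).card = i := by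
    intro i hi
    rw [Finset.card_image_of_injOn, Finset.card_range]
    intro x hx y hy hxy
    exact hinj x (lt_of_lt_of_le (Finset.mem_range.mp hx) hi) y
      (lt_of_lt_of_le (Finset.mem_range.mp hy) hi) hxy
  have hsubset : ∀ i ≤ r, (Finset.range i).image e ⊆ S :=
    fun i hi => Finset.image_subset_image (Finset.range_subset_range.mpr hi)
  have hOPT : 0 ≤ f S := hnonneg S
  have hr0 : (0:ℝ) < r := by exact_mod_cast hr
  have step : ∀ i < r,
      f S - f ((Finset.range i).image e) ≤
        ((r : ℝ) - i) * (f ((Finset.range (i+1)).image e) - f ((Finset.range i).image e)) := by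
    intro i hi
    set A := (Finset.range i).image e with hA'
    have hA : A ⊆ S := hsubset i hi.le
    have hT : (S \ A).card = r - i := by
      rw [Finset.card_sdiff_of_subset hA, hcard r le_rfl, hA', hcard i hi.le]
    have hun : A ∪ (S \ A) = S := Finset.union_sdiff_of_subset hA
    have hd : Disjoint A (S \ A) := Finset.disjoint_sdiff
    have hsum := sub_sum_bound f hf A (S \ A) hd
    rw [hun] at hsum
    have hA1 : (Finset.range (i+1)).image e = insert (e i) A := by
      rw [Finset.range_add_one, Finset.image_insert]
    have hbound : ∀ x ∈ S \ A, f (insert x A) - f A ≤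
        f ((Finset.range (i+1)).image e) - f A := by
      intro x hx
      rw [hA1]
      exact hgreedy i hi x hx
    have hsum2 := Finset.sum_le_card_nsmul (S \ A) _ _ hbound
    rw [hT, nsmul_eq_mul] at hsum2
    have hcast : ((r - i : ℕ) : ℝ) = (r : ℝ) - i := by
      rw [Nat.cast_sub hi.le]
    rw [hcast] at hsum2
    linarith
  intro C
  induction C with
  | zero => intro _; simp [hempty, hnonneg S]
  | succ C ih =>
    intro hC
    have hCr : C < r := hC
    have ihC := ih hCr.le
    have hstep := step C hCr
    set t := f ((Finset.range C).image e) with ht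
    set u := f ((Finset.range (C+1)).image e) with hu
    have hd1 : (1 : ℝ) ≤ (r : ℝ) - C := by
      have : (C:ℝ) + 1 ≤ r := by exact_mod_cast hC
      linarith
    have h1 : (C:ℝ) * f S ≤ t * r := by
      rw [ge_iff_le, div_mul_eq_mul_div, div_le_iff₀ hr0] at ihC
      linarith
    have key : (0:ℝ) ≤ (t * r - C * f S) * ((r : ℝ) - C - 1) :=
      mul_nonneg (by linarith) (by linarith)
    rw [ge_iff_le, div_mul_eq_mul_div, div_le_iff₀ hr0]
    push_cast
    nlinarith [mul_le_mul_of_nonneg_left hstep (le_of_lt hr0), key, hOPT, hd1, hr0]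
end
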